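/- arXiv:2202.12277 — 4 statements merged into one kernel-verified Lean document; each statement's English description precedes it below -/
import Mathlib

section
/- Let X ⊆ ℝⁿ and Y ⊆ ℝᵐ be nonempty convex compact sets and F : X × Y → ℝ be such that x ↦ F(x,y) is convex for every y ∈ Y and y ↦ F(x,y) is concave for every x ∈ X. Let T ≥ 1 and let x_1,…,x_T ∈ X, y_1,…,y_T ∈ Y, f_1,…,f_T ∈ ℝⁿ, g_1,…,g_T ∈ ℝᵐ satisfy, for every t: F(x, y_t) ≥ F(x_t, y_t) + ⟨f_t, x − x_t⟩ for all x ∈ X, and F(x_t, y) ≤ F(x_t, y_t) + ⟨g_t, y − y_t⟩ for all y ∈ Y. Set x̄_T = (1/T)∑_{t=1}^T x_t and ȳ_T = (1/T)∑_{t=1}^T y_t. Then sup_{y∈Y} F(x̄_T, y) − inf_{x∈X} F(x, ȳ_T) ≤ (R_{T,x} + R_{T,y})/T, where R_{T,x} = ∑_{t=1}^T ⟨f_t, x_t⟩ − inf_{x∈X} ∑_{t=1}^T ⟨f_t, x⟩ and R_{T,y} = sup_{y∈Y} ∑_{t=1}^T ⟨g_t, y⟩ − ∑_{t=1}^T ⟨g_t,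 y_t⟩. -/
set_option autoImplicit false

open scoped RealInnerProductSpace
open Finset

/-! Averaging the subgradient inequalities gives, for the common quantity
`C = ∑ₜ F(xₜ, yₜ)`, the bounds `T F(x̄, y) ≤ C + ∑ₜ ⟪gₜ, y - yₜ⟫` (Jensen in `x`) and
`C + ∑ₜ ⟪fₜ, x - xₜ⟫ ≤ T F(x, ȳ)` (Jensen in `y`) for all `y ∈ Y`, `x ∈ X`. Taking the supremum
over `y` in the first and the infimum over `x` in the second, the `C` cancels in the difference
and what remains are the two regrets. -/

section Jensen

variable {ι E : Type*} [AddCommGroup E] [Module ℝ E] {X : Set E} {φ : E → ℝ}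
  {s : Finset ι} {p : ι → E} {b : ι → ℝ}

theorem ConvexOn.map_average_le_of_le (hφ : ConvexOn ℝ X φ) (hs : s.Nonempty)
    (hp : ∀ i ∈ s, p i ∈ X) (hb : ∀ i ∈ s, φ (p i) ≤ b i) :
    φ ((#s : ℝ)⁻¹ • ∑ i ∈ s, p i) ≤ (#s : ℝ)⁻¹ * ∑ i ∈ s, b i := by
  have hw : ∑ _i ∈ s, (#s : ℝ)⁻¹ = 1 := by simp [hs.card_pos.ne']
  calc φ ((#s : ℝ)⁻¹ • ∑ i ∈ s, p i) = φ (∑ i ∈ s, (#s : ℝ)⁻¹ • p i) := by rw [smul_sum]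
    _ ≤ ∑ i ∈ s, (#s : ℝ)⁻¹ * φ (p i) := hφ.map_sum_le (fun _ _ => by positivity) hw hp
    _ ≤ ∑ i ∈ s, (#s : ℝ)⁻¹ * b i := sum_le_sum fun i hi => by gcongr; exact hb i hi
    _ = (#s : ℝ)⁻¹ * ∑ i ∈ s, b i := (mul_sum _ _ _).symm

theorem ConcaveOn.le_map_average_of_le (hφ : ConcaveOn ℝ X φ) (hs : s.Nonempty)
    (hp : ∀ i ∈ s, p i ∈ X) (hb : ∀ i ∈ s, b i ≤ φ (p i)) :
    (#s : ℝ)⁻¹ * ∑ i ∈ s, b i ≤ φ ((#s : ℝ)⁻¹ • ∑ i ∈ s, p i) := by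
  simpa using hφ.neg.map_average_le_of_le hs hp (b := fun i => -b i) fun i hi => neg_le_neg (hb i hi)

end Jensen

section SaddlePoint

variable {ι E E' : Type*} [NormedAddCommGroup E] [InnerProductSpace ℝ E]
  [NormedAddCommGroup E'] [InnerProductSpace ℝ E'] {X : Set E} {Y : Set E'} {F : E → E' → ℝ}
  {s : Finset ι} {x f : ι → E} {y g : ι → E'}

theorem iSup_map_average_le [Nonempty Y] (hYcp : IsCompact Y)
    (hFcv : ∀ y' ∈ Y, ConvexOn ℝ X fun x' => F x' y') (hs : s.Nonempty)
    (hx : ∀ t ∈ s, x t ∈ X)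
    (hg : ∀ t ∈ s, ∀ y' ∈ Y, F (x t) y' ≤ F (x t) (y t) + ⟪g t, y' - y t⟫) :
    ⨆ yy : Y, F ((#s : ℝ)⁻¹ • ∑ t ∈ s, x t) yy ≤
      (#s : ℝ)⁻¹ * (∑ t ∈ s, F (x t) (y t) + (⨆ yy : Y, ∑ t ∈ s, ⟪g t, (yy : E')⟫)
        - ∑ t ∈ s, ⟪g t, y t⟫) := by
  have hbdd : BddAbove (Set.range fun yy : Y => ∑ t ∈ s, ⟪g t, (yy : E')⟫) :=
    Set.image_eq_range (fun y' => ∑ t ∈ s, ⟪g t, y'⟫) Y ▸ hYcp.bddAbove_image (by fun_prop)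
  refine ciSup_le fun yy => ?_
  calc F ((#s : ℝ)⁻¹ • ∑ t ∈ s, x t) yy
      ≤ (#s : ℝ)⁻¹ * ∑ t ∈ s, (F (x t) (y t) + ⟪g t, (yy : E') - y t⟫) :=
        (hFcv yy yy.2).map_average_le_of_le hs hx fun t ht => hg t ht yy yy.2
    _ = (#s : ℝ)⁻¹ * (∑ t ∈ s, F (x t) (y t) + ∑ t ∈ s, ⟪g t, (yy : E')⟫
        - ∑ t ∈ s, ⟪g t, y t⟫) := by
      simp only [inner_sub_right, sum_add_distrib, sum_sub_distrib, add_sub_assoc]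
    _ ≤ _ := by gcongr; exact le_ciSup hbdd yy

theorem le_iInf_map_average [Nonempty X] (hXcp : IsCompact X)
    (hFcc : ∀ x' ∈ X, ConcaveOn ℝ Y fun y' => F x' y') (hs : s.Nonempty)
    (hy : ∀ t ∈ s, y t ∈ Y)
    (hf : ∀ t ∈ s, ∀ x' ∈ X, F (x t) (y t) + ⟪f t, x' - x t⟫ ≤ F x' (y t)) :
    (#s : ℝ)⁻¹ * (∑ t ∈ s, F (x t) (y t) - ∑ t ∈ s, ⟪f t, x t⟫
        + ⨅ xx : X, ∑ t ∈ s, ⟪f t, (xx : E)⟫) ≤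
      ⨅ xx : X, F xx ((#s : ℝ)⁻¹ • ∑ t ∈ s, y t) := by
  have hbdd : BddBelow (Set.range fun xx : X => ∑ t ∈ s, ⟪f t, (xx : E)⟫) :=
    Set.image_eq_range (fun x' => ∑ t ∈ s, ⟪f t, x'⟫) X ▸ hXcp.bddBelow_image (by fun_prop)
  refine le_ciInf fun xx => ?_
  calc _ ≤ (#s : ℝ)⁻¹ * (∑ t ∈ s, F (x t) (y t) - ∑ t ∈ s, ⟪f t, x t⟫
          + ∑ t ∈ s, ⟪f t, (xx : E)⟫) := by gcongr; exact ciInf_le hbdd xx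
    _ = (#s : ℝ)⁻¹ * ∑ t ∈ s, (F (x t) (y t) + ⟪f t, (xx : E) - x t⟫) := by
      simp only [inner_sub_right, sum_add_distrib, sum_sub_distrib]; ring
    _ ≤ F xx ((#s : ℝ)⁻¹ • ∑ t ∈ s, y t) :=
        (hFcc xx xx.2).le_map_average_of_le hs hy fun t ht => hf t ht xx xx.2

theorem iSup_sub_iInf_map_average_le_regret (hXcp : IsCompact X) (hYcp : IsCompact Y)
    (hFcv : ∀ y' ∈ Y, ConvexOn ℝ X fun x' => F x' y')
    (hFcc : ∀ x' ∈ X, ConcaveOn ℝ Y fun y' => F x' y') (hs : s.Nonempty)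
    (hx : ∀ t ∈ s, x t ∈ X) (hy : ∀ t ∈ s, y t ∈ Y)
    (hf : ∀ t ∈ s, ∀ x' ∈ X, F (x t) (y t) + ⟪f t, x' - x t⟫ ≤ F x' (y t))
    (hg : ∀ t ∈ s, ∀ y' ∈ Y, F (x t) y' ≤ F (x t) (y t) + ⟪g t, y' - y t⟫) :
    (⨆ yy : Y, F ((#s : ℝ)⁻¹ • ∑ t ∈ s, x t) yy)
        - (⨅ xx : X, F xx ((#s : ℝ)⁻¹ • ∑ t ∈ s, y t))
      ≤ ((∑ t ∈ s, ⟪f t, x t⟫ - ⨅ xx : X, ∑ t ∈ s, ⟪f t, (xx : E)⟫)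
          + ((⨆ yy : Y, ∑ t ∈ s, ⟪g t, (yy : E')⟫) - ∑ t ∈ s, ⟪g t, y t⟫)) / #s := by
  obtain ⟨t₀, ht₀⟩ := hs
  have : Nonempty X := ⟨⟨x t₀, hx t₀ ht₀⟩⟩
  have : Nonempty Y := ⟨⟨y t₀, hy t₀ ht₀⟩⟩
  calc _ ≤ _ := sub_le_sub (iSup_map_average_le hYcp hFcv ⟨t₀, ht₀⟩ hx hg)
        (le_iInf_map_average hXcp hFcc ⟨t₀, ht₀⟩ hy hf)
    _ = _ := by ring

end SaddlePoint

theorem stmt0_general {n m : ℕ}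
    (X : Set (EuclideanSpace ℝ (Fin n))) (Y : Set (EuclideanSpace ℝ (Fin m)))
    (hXcp : IsCompact X) (hYcp : IsCompact Y)
    (F : EuclideanSpace ℝ (Fin n) → EuclideanSpace ℝ (Fin m) → ℝ)
    (hFcv : ∀ y ∈ Y, ConvexOn ℝ X (fun x => F x y))
    (hFcc : ∀ x ∈ X, ConcaveOn ℝ Y (fun y => F x y))
    (T : ℕ) (hT : 1 ≤ T)
    (x : ℕ → EuclideanSpace ℝ (Fin n)) (y : ℕ → EuclideanSpace ℝ (Fin m))
    (f : ℕ → EuclideanSpace ℝ (Fin n)) (g : ℕ → EuclideanSpace ℝ (Fin m))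
    (hx : ∀ t ∈ Icc 1 T, x t ∈ X) (hy : ∀ t ∈ Icc 1 T, y t ∈ Y)
    (hf : ∀ t ∈ Icc 1 T, ∀ x' ∈ X, F (x t) (y t) + ⟪f t, x' - x t⟫ ≤ F x' (y t))
    (hg : ∀ t ∈ Icc 1 T, ∀ y' ∈ Y, F (x t) y' ≤ F (x t) (y t) + ⟪g t, y' - y t⟫) :
    (⨆ yy : Y, F ((T : ℝ)⁻¹ • ∑ t ∈ Icc 1 T, x t) yy)
        - (⨅ xx : X, F xx ((T : ℝ)⁻¹ • ∑ t ∈ Icc 1 T, y t))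
      ≤ ((∑ t ∈ Icc 1 T, ⟪f t, x t⟫
            - ⨅ xx : X, ∑ t ∈ Icc 1 T, ⟪f t, (xx : EuclideanSpace ℝ (Fin n))⟫)
          + ((⨆ yy : Y, ∑ t ∈ Icc 1 T, ⟪g t, (yy : EuclideanSpace ℝ (Fin m))⟫)
            - ∑ t ∈ Icc 1 T, ⟪g t, y t⟫)) / T := by
  have hcard : (#(Icc 1 T) : ℝ) = T := by simp
  simpa only [hcard] using iSup_sub_iInf_map_average_le_regret hXcp hYcp hFcv hFcc
    (nonempty_Icc.2 hT) hx hy hf hg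

/-- Theorem 1, folk theorem: the duality gap of the uniform average
iterates is bounded by the sum of the two players' regrets divided by `T`. -/
theorem stmt0 {n m : ℕ}
    (X : Set (EuclideanSpace ℝ (Fin n))) (Y : Set (EuclideanSpace ℝ (Fin m)))
    (hXne : X.Nonempty) (hXcv : Convex ℝ X) (hXcp : IsCompact X)
    (hYne : Y.Nonempty) (hYcv : Convex ℝ Y) (hYcp : IsCompact Y)
    (F : EuclideanSpace ℝ (Fin n) → EuclideanSpace ℝ (Fin m) → ℝ)
    (hFcv : ∀ y ∈ Y, ConvexOn ℝ X (fun x => F x y))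
    (hFcc : ∀ x ∈ X, ConcaveOn ℝ Y (fun y => F x y))
    (T : ℕ) (hT : 1 ≤ T)
    (x : ℕ → EuclideanSpace ℝ (Fin n)) (y : ℕ → EuclideanSpace ℝ (Fin m))
    (f : ℕ → EuclideanSpace ℝ (Fin n)) (g : ℕ → EuclideanSpace ℝ (Fin m))
    (hx : ∀ t ∈ Icc 1 T, x t ∈ X) (hy : ∀ t ∈ Icc 1 T, y t ∈ Y)
    (hf : ∀ t ∈ Icc 1 T, ∀ x' ∈ X, F (x t) (y t) + ⟪f t, x' - x t⟫ ≤ F x' (y t))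
    (hg : ∀ t ∈ Icc 1 T, ∀ y' ∈ Y, F (x t) y' ≤ F (x t) (y t) + ⟪g t, y' - y t⟫) :
    (⨆ yy : Y, F ((T : ℝ)⁻¹ • ∑ t ∈ Icc 1 T, x t) yy)
        - (⨅ xx : X, F xx ((T : ℝ)⁻¹ • ∑ t ∈ Icc 1 T, y t))
      ≤ ((∑ t ∈ Icc 1 T, ⟪f t, x t⟫
            - ⨅ xx : X, ∑ t ∈ Icc 1 T, ⟪f t, (xx : EuclideanSpace ℝ (Fin n))⟫)
          + ((⨆ yy : Y, ∑ t ∈ Icc 1 T, ⟪g t, (yy : EuclideanSpace ℝ (Fin m))⟫)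
            - ∑ t ∈ Icc 1 T, ⟪g t, y t⟫)) / T :=
  stmt0_general X Y hXcp hYcp F hFcv hFcc T hT x y f g hx hy hf hg
end

section
/- Let X ⊆ ℝⁿ be a nonempty convex compact set with κ = max_{x∈X} ‖x‖₂ > 0, C = cone({κ} × X) ⊆ ℝ^{n+1} and C° its polar cone. Let T ≥ 1, nonnegative weights θ_1,…,θ_T, losses f_1,…,f_T ∈ ℝⁿ, decisions x_1,…,x_T ∈ X, and set v_t = (⟨f_t, x_t⟩/κ, −f_t) ∈ ℝ × ℝⁿ = ℝ^{n+1}. Then ∑_{t=1}^T θ_t ⟨f_t, x_t⟩ − inf_{x∈X} ∑_{t=1}^T θ_t ⟨f_t, x⟩ ≤ √2 · κ · d(∑_{t=1}^T θ_t v_t, C°), where d(u, S) = inf{‖u − z‖₂ : z ∈ S}. -/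
/-! For `y ∈ X` the generator `w = (κ, y)` of `C` has norm at most `√2 κ`, and its pairing with
the aggregate payoff `u = ∑ θ_t v_t` is exactly the weighted regret against `y`. For every
`z ∈ C°` we have `⟪z, w⟫ ≤ 0`, so `⟪u, w⟫ ≤ ⟪u - z, w⟫ ≤ ‖w‖ ‖u - z‖` by Cauchy–Schwarz;
taking the infimum over `z` and then the supremum over `y` gives the bound. -/

set_option autoImplicit false

open scoped RealInnerProductSpace
open Finset

noncomputable section

/-- The lifted vector `(t, y) ∈ ℝ × ℝⁿ = ℝ^{n+1}`. -/
def pr {n : ℕ} (t : ℝ) (y : EuclideanSpace ℝ (Fin n)) :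
    EuclideanSpace ℝ (Fin (n + 1)) :=
  WithLp.toLp 2 (Fin.cons t (fun i => y i) : Fin (n + 1) → ℝ)

/-- The conic hull `cone({κ} × X) = {α • (κ, x) : α ≥ 0, x ∈ X}`. -/
def coneLift {n : ℕ} (κ : ℝ) (X : Set (EuclideanSpace ℝ (Fin n))) :
    Set (EuclideanSpace ℝ (Fin (n + 1))) :=
  {u | ∃ α : ℝ, 0 ≤ α ∧ ∃ x ∈ X, u = α • pr κ x}

/-- The polar cone `C° = {z : ⟨z, w⟩ ≤ 0 ∀ w ∈ C}`. -/
def polarCone {E : Type*} [NormedAddCommGroup E] [InnerProductSpace ℝ E]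
    (C : Set E) : Set E :=
  {z | ∀ w ∈ C, ⟪z, w⟫ ≤ 0}

lemma zero_mem_polarCone {E : Type*} [NormedAddCommGroup E] [InnerProductSpace ℝ E]
    (C : Set E) : (0 : E) ∈ polarCone C :=
  fun w _ => (inner_zero_left w).le

lemma inner_le_norm_mul_infDist_polarCone {E : Type*} [NormedAddCommGroup E]
    [InnerProductSpace ℝ E] {C : Set E} {w : E} (hw : w ∈ C) (u : E) :
    ⟪u, w⟫ ≤ ‖w‖ * Metric.infDist u (polarCone C) := by
  have : Nonempty (polarCone C) := ⟨⟨0, zero_mem_polarCone C⟩⟩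
  rw [Metric.infDist_eq_iInf, Real.mul_iInf_of_nonneg (norm_nonneg w)]
  refine le_ciInf fun ⟨z, hz⟩ => ?_
  calc ⟪u, w⟫ = ⟪u - z, w⟫ + ⟪z, w⟫ := by rw [inner_sub_left]; ring
    _ ≤ ‖u - z‖ * ‖w‖ + 0 := add_le_add (real_inner_le_norm _ _) (hz w hw)
    _ = ‖w‖ * dist u z := by rw [add_zero, mul_comm, dist_eq_norm]

lemma inner_pr {n : ℕ} (a b : ℝ) (y z : EuclideanSpace ℝ (Fin n)) :
    ⟪pr a y, pr b z⟫ = a * b + ⟪y, z⟫ := by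
  simp [pr, PiLp.inner_apply, Fin.sum_univ_succ, RCLike.inner_apply, mul_comm]

lemma norm_pr_le {n : ℕ} {κ : ℝ} (hκ : 0 ≤ κ) {y : EuclideanSpace ℝ (Fin n)} (hy : ‖y‖ ≤ κ) :
    ‖pr κ y‖ ≤ Real.sqrt 2 * κ := by
  have hsq : ‖pr κ y‖ ^ 2 = κ ^ 2 + ‖y‖ ^ 2 := by
    rw [← real_inner_self_eq_norm_sq, ← real_inner_self_eq_norm_sq, inner_pr, sq]
  refine le_of_pow_le_pow_left₀ two_ne_zero (by positivity) ?_
  rw [hsq, mul_pow, Real.sq_sqrt zero_le_two]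
  nlinarith [norm_nonneg y]

lemma pr_mem_coneLift {n : ℕ} (κ : ℝ) {X : Set (EuclideanSpace ℝ (Fin n))}
    {y : EuclideanSpace ℝ (Fin n)} (hy : y ∈ X) : pr κ y ∈ coneLift κ X :=
  ⟨1, zero_le_one, y, hy, (one_smul ℝ _).symm⟩

lemma inner_sum_smul_pr_payoff {n : ℕ} {κ : ℝ} (hκ : κ ≠ 0) (s : Finset ℕ) (θ : ℕ → ℝ)
    (f x : ℕ → EuclideanSpace ℝ (Fin n)) (y : EuclideanSpace ℝ (Fin n)) :
    ⟪∑ t ∈ s, θ t • pr (⟪f t, x t⟫ / κ) (-(f t)), pr κ y⟫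
      = ∑ t ∈ s, θ t * ⟪f t, x t⟫ - ∑ t ∈ s, θ t * ⟪f t, y⟫ := by
  rw [sum_inner, ← sum_sub_distrib]
  refine sum_congr rfl fun t _ => ?_
  rw [real_inner_smul_left, inner_pr, div_mul_cancel₀ _ hκ, inner_neg_left]
  ring

theorem stmt3_general {n : ℕ} (X : Set (EuclideanSpace ℝ (Fin n)))
    (hXne : X.Nonempty)
    (κ : ℝ) (hκ : IsGreatest ((fun x => ‖x‖) '' X) κ) (hκpos : 0 < κ)
    (T : ℕ) (θ : ℕ → ℝ)
    (f x : ℕ → EuclideanSpace ℝ (Fin n)) :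
    (∑ t ∈ Icc 1 T, θ t * ⟪f t, x t⟫)
        - (⨅ xx : X, ∑ t ∈ Icc 1 T, θ t * ⟪f t, (xx : EuclideanSpace ℝ (Fin n))⟫)
      ≤ Real.sqrt 2 * κ *
        Metric.infDist (∑ t ∈ Icc 1 T, θ t • pr (⟪f t, x t⟫ / κ) (-(f t)))
          (polarCone (coneLift κ X)) := by
  have : Nonempty X := hXne.to_subtype
  rw [sub_le_comm]
  refine le_ciInf fun ⟨y, hy⟩ => ?_
  rw [sub_le_comm, ← inner_sum_smul_pr_payoff hκpos.ne']
  calc _ ≤ ‖pr κ y‖ * _ := inner_le_norm_mul_infDist_polarCone (pr_mem_coneLift κ hy) _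
    _ ≤ _ := mul_le_mul_of_nonneg_right (norm_pr_le hκpos.le (hκ.2 ⟨y, hy, rfl⟩))
        Metric.infDist_nonneg

/-- the weighted regret is bounded by `√2 · κ` times the Euclidean
distance of the weighted aggregate payoff `∑ θ_t v_t` to the polar cone `C°`,
where `v_t = (⟨f_t, x_t⟩/κ, −f_t)`. -/
theorem stmt3 {n : ℕ} (X : Set (EuclideanSpace ℝ (Fin n)))
    (hXne : X.Nonempty) (hXcv : Convex ℝ X) (hXcp : IsCompact X)
    (κ : ℝ) (hκ : IsGreatest ((fun x => ‖x‖) '' X) κ) (hκpos : 0 < κ)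
    (T : ℕ) (hT : 1 ≤ T) (θ : ℕ → ℝ) (hθ : ∀ t ∈ Icc 1 T, 0 ≤ θ t)
    (f x : ℕ → EuclideanSpace ℝ (Fin n)) (hx : ∀ t ∈ Icc 1 T, x t ∈ X) :
    (∑ t ∈ Icc 1 T, θ t * ⟪f t, x t⟫)
        - (⨅ xx : X, ∑ t ∈ Icc 1 T, θ t * ⟪f t, (xx : EuclideanSpace ℝ (Fin n))⟫)
      ≤ Real.sqrt 2 * κ *
        Metric.infDist (∑ t ∈ Icc 1 T, θ t • pr (⟪f t, x t⟫ / κ) (-(f t)))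
          (polarCone (coneLift κ X)) :=
  stmt3_general X hXne κ hκ hκpos T θ f x

end
end

section
/- Let X ⊆ ℝⁿ be a nonempty convex compact set with κ = max_{x∈X} ‖x‖₂ > 0, C = cone({κ} × X) ⊆ ℝ^{n+1} and C° its polar cone. Let positive weights (ω_t), losses f_t ∈ ℝⁿ and decisions x_t ∈ X for t = 1,…,T, set v_t = (⟨f_t, x_t⟩/κ, −f_t), and define the CBA iterates u_0 = 0 and u_t = u_{t−1} + ω_t v_t. Assume the CBA choice rule: for every t there exists α_t ≥ 0 with π_C(u_{t−1}) = α_t · (κ, x_t). Then d(u_T, C°)² ≤ ∑_{t=1}^T ω_t² ‖v_t‖₂²; in particular, if ‖f_t‖₂ ≤ L for all t, then d(u_T, C°) ≤ √2 · L · √(∑_{t=1}^T ω_t²). -/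
/-!
The decision `x_t` is read off the projection `q = π_C(u_{t-1})`, so `q` is orthogonal to the
payoff `v_t`. For a convex cone, `u - π_C(u)` lies in `C°`, is orthogonal to `π_C(u)`, and
`d(u, C°) = ‖π_C(u)‖` (Moreau). Hence `d(u_t, C°) ≤ ‖q + ω_t v_t‖` and by Pythagoras
`d(u_t, C°)² ≤ d(u_{t-1}, C°)² + ω_t² ‖v_t‖²`, which telescopes from `u_0 = 0`.
-/

set_option autoImplicit false

open scoped RealInnerProductSpace
open Finset

noncomputable section

/-- `p` is the Euclidean orthogonal projection of `u` onto the set `S`. -/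
def IsProjOn {E : Type*} [NormedAddCommGroup E] [InnerProductSpace ℝ E]
    (u : E) (S : Set E) (p : E) : Prop :=
  p ∈ S ∧ ∀ z ∈ S, dist u p ≤ dist u z

section ConeProjection

variable {E : Type*} [NormedAddCommGroup E] [InnerProductSpace ℝ E] {u q : E}

lemma zero_mem_polarCone_s4 (S : Set E) : (0 : E) ∈ polarCone S :=
  fun w _ => (inner_zero_left w).le

lemma IsProjOn.inner_sub_le_zero {K : Set E} (hK : Convex ℝ K) (h : IsProjOn u K q)
    {z : E} (hz : z ∈ K) : ⟪u - q, z - q⟫ ≤ 0 := by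
  have : Nonempty K := ⟨⟨q, h.1⟩⟩
  have hmin : ‖u - q‖ = ⨅ w : K, ‖u - w‖ :=
    le_antisymm (le_ciInf fun w => by simpa only [dist_eq_norm] using h.2 w w.2)
      (ciInf_le ⟨0, Set.forall_mem_range.2 fun w : K => norm_nonneg (u - w)⟩ ⟨q, h.1⟩)
  exact (norm_eq_iInf_iff_real_inner_le_zero hK h.1).1 hmin z hz

lemma IsProjOn.sub_mem_polarCone {K : ConvexCone ℝ E} (h : IsProjOn u K q) :
    u - q ∈ polarCone K := fun w hw => by
  simpa using h.inner_sub_le_zero K.convex (K.add_mem h.1 hw)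

lemma IsProjOn.inner_sub_self_eq_zero {K : ConvexCone ℝ E} (h : IsProjOn u K q) :
    ⟪u - q, q⟫ = 0 := by
  have h2 := h.inner_sub_le_zero K.convex (K.smul_mem two_pos h.1)
  have hhalf := h.inner_sub_le_zero K.convex (K.smul_mem (half_pos one_pos) h.1)
  rw [inner_sub_right, real_inner_smul_right] at h2 hhalf
  linarith

lemma infDist_add_polarCone_eq_norm {S : Set E} {p : E} (hp : p ∈ polarCone S) (hq : q ∈ S)
    (hpq : ⟪p, q⟫ = 0) : Metric.infDist (p + q) (polarCone S) = ‖q‖ := by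
  refine le_antisymm ?_ ((Metric.le_infDist ⟨p, hp⟩).2 fun z hz => ?_)
  · simpa [dist_eq_norm] using Metric.infDist_le_dist_of_mem (x := p + q) hp
  · have hqz : ⟪q, p - z⟫ ≥ 0 := by
      rw [inner_sub_right, real_inner_comm p, hpq]
      linarith [hz q hq, real_inner_comm q z]
    have : ‖q‖ ^ 2 ≤ dist (p + q) z ^ 2 := by
      rw [dist_eq_norm, show p + q - z = q + (p - z) by abel, norm_add_sq_real]
      nlinarith [sq_nonneg ‖p - z‖]
    exact le_of_sq_le_sq this dist_nonneg

lemma IsProjOn.infDist_add_sq_le {K : ConvexCone ℝ E} (h : IsProjOn u K q) {w : E}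
    (hw : ⟪q, w⟫ = 0) :
    Metric.infDist (u + w) (polarCone K) ^ 2 ≤ Metric.infDist u (polarCone K) ^ 2 + ‖w‖ ^ 2 := by
  have hd : Metric.infDist u (polarCone K) = ‖q‖ := by
    simpa using infDist_add_polarCone_eq_norm h.sub_mem_polarCone h.1 h.inner_sub_self_eq_zero
  have hle : Metric.infDist (u + w) (polarCone K) ≤ ‖q + w‖ := by
    simpa [dist_eq_norm, add_sub_right_comm] using
      Metric.infDist_le_dist_of_mem (x := u + w) h.sub_mem_polarCone
  calc Metric.infDist (u + w) (polarCone K) ^ 2 ≤ ‖q + w‖ ^ 2 :=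
        pow_le_pow_left₀ Metric.infDist_nonneg hle 2
    _ = Metric.infDist u (polarCone K) ^ 2 + ‖w‖ ^ 2 := by
        simp only [hd, sq, norm_add_sq_eq_norm_sq_add_norm_sq_real hw]

end ConeProjection

section Lift

variable {n : ℕ}

lemma pr_add (s t : ℝ) (y z : EuclideanSpace ℝ (Fin n)) :
    pr s y + pr t z = pr (s + t) (y + z) := by
  ext i; refine Fin.cases ?_ ?_ i <;> simp [pr]

lemma smul_pr (c s : ℝ) (y : EuclideanSpace ℝ (Fin n)) :
    c • pr s y = pr (c * s) (c • y) := by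
  ext i; refine Fin.cases ?_ ?_ i <;> simp [pr]

lemma inner_pr_pr (s t : ℝ) (y z : EuclideanSpace ℝ (Fin n)) :
    ⟪pr s y, pr t z⟫ = s * t + ⟪y, z⟫ := by
  simp [pr, PiLp.inner_apply, Fin.sum_univ_succ, mul_comm]

lemma norm_pr_sq (s : ℝ) (y : EuclideanSpace ℝ (Fin n)) :
    ‖pr s y‖ ^ 2 = s ^ 2 + ‖y‖ ^ 2 := by
  rw [← real_inner_self_eq_norm_sq, ← real_inner_self_eq_norm_sq, inner_pr_pr, sq]

def Convex.liftCone {X : Set (EuclideanSpace ℝ (Fin n))} (hX : Convex ℝ X) (κ : ℝ) :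
    ConvexCone ℝ (EuclideanSpace ℝ (Fin (n + 1))) where
  carrier := coneLift κ X
  smul_mem' c hc _ := fun ⟨α, hα, x, hx, h⟩ =>
    ⟨c * α, mul_nonneg hc.le hα, x, hx, by rw [h, smul_smul]⟩
  add_mem' _ := fun ⟨α, hα, x, hx, ha⟩ _ ⟨β, hβ, y, hy, hb⟩ => by
    obtain ⟨z, hz, hzxy⟩ := hX.exists_mem_add_smul_eq hx hy hα hβ
    refine ⟨α + β, add_nonneg hα hβ, z, hz, ?_⟩
    rw [ha, hb, smul_pr, smul_pr, smul_pr, pr_add, hzxy, add_mul]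

def cbaPayoff (κ : ℝ) (f x : EuclideanSpace ℝ (Fin n)) : EuclideanSpace ℝ (Fin (n + 1)) :=
  pr (⟪f, x⟫ / κ) (-f)

lemma inner_pr_cbaPayoff {κ : ℝ} (hκ : κ ≠ 0) (f x : EuclideanSpace ℝ (Fin n)) :
    ⟪pr κ x, cbaPayoff κ f x⟫ = 0 := by
  rw [cbaPayoff, inner_pr_pr, inner_neg_right, real_inner_comm, mul_div_cancel₀ _ hκ,
    add_neg_cancel]

lemma norm_cbaPayoff_le {κ : ℝ} (hκ : 0 < κ) (f : EuclideanSpace ℝ (Fin n))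
    {x : EuclideanSpace ℝ (Fin n)} (hx : ‖x‖ ≤ κ) : ‖cbaPayoff κ f x‖ ≤ √2 * ‖f‖ := by
  have hfx : |⟪f, x⟫ / κ| ≤ ‖f‖ := by
    rw [abs_div, abs_of_pos hκ, div_le_iff₀ hκ]
    exact (abs_real_inner_le_norm f x).trans (mul_le_mul_of_nonneg_left hx (norm_nonneg f))
  refine le_of_sq_le_sq ?_ (by positivity)
  rw [cbaPayoff, norm_pr_sq, norm_neg, ← sq_abs, mul_pow, Real.sq_sqrt zero_le_two]
  nlinarith [abs_nonneg (⟪f, x⟫ / κ)]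

lemma IsProjOn.infDist_add_smul_cbaPayoff_sq_le {X : Set (EuclideanSpace ℝ (Fin n))}
    (hX : Convex ℝ X) {κ : ℝ} (hκ : κ ≠ 0) {u : EuclideanSpace ℝ (Fin (n + 1))} {α ω : ℝ}
    {f x : EuclideanSpace ℝ (Fin n)} (h : IsProjOn u (coneLift κ X) (α • pr κ x)) :
    Metric.infDist (u + ω • cbaPayoff κ f x) (polarCone (coneLift κ X)) ^ 2
      ≤ Metric.infDist u (polarCone (coneLift κ X)) ^ 2 + ω ^ 2 * ‖cbaPayoff κ f x‖ ^ 2 := by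
  have horth : ⟪α • pr κ x, ω • cbaPayoff κ f x⟫ = 0 := by
    rw [real_inner_smul_left, real_inner_smul_right, inner_pr_cbaPayoff hκ, mul_zero, mul_zero]
  have hstep := IsProjOn.infDist_add_sq_le (K := hX.liftCone κ) h horth
  rwa [norm_smul, mul_pow, Real.norm_eq_abs, sq_abs] at hstep

end Lift

lemma le_sum_Icc_of_le_add {g a : ℕ → ℝ} {T : ℕ} (h0 : g 0 ≤ 0)
    (hstep : ∀ t ∈ Icc 1 T, g t ≤ g (t - 1) + a t) : g T ≤ ∑ t ∈ Icc 1 T, a t := by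
  induction T with
  | zero => simpa using h0
  | succ T ih =>
    rw [sum_Icc_succ_top (by omega)]
    have hlast := hstep (T + 1) (by simp)
    have hprev := ih fun t ht => hstep t (Icc_subset_Icc_right (Nat.le_succ T) ht)
    simp only [add_tsub_cancel_right] at hlast
    linarith

lemma le_mul_sqrt_sum_sq {ι F : Type*} [SeminormedAddCommGroup F] {s : Finset ι} {d c : ℝ}
    {ω : ι → ℝ} {v : ι → F} (hd : 0 ≤ d) (hds : d ^ 2 ≤ ∑ i ∈ s, ω i ^ 2 * ‖v i‖ ^ 2)
    (hv : ∀ i ∈ s, ‖v i‖ ≤ c) : d ≤ c * √(∑ i ∈ s, ω i ^ 2) := by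
  rcases s.eq_empty_or_nonempty with rfl | ⟨i, hi⟩
  · simp only [sum_empty, Real.sqrt_zero, mul_zero] at hds ⊢
    nlinarith
  have hc : 0 ≤ c := (norm_nonneg _).trans (hv i hi)
  have hsum : ∑ i ∈ s, ω i ^ 2 * ‖v i‖ ^ 2 ≤ c ^ 2 * ∑ i ∈ s, ω i ^ 2 := by
    rw [mul_sum]
    refine sum_le_sum fun i hi => ?_
    rw [mul_comm]
    gcongr
    exact hv i hi
  rw [← Real.sqrt_sq hd, ← Real.sqrt_sq hc, ← Real.sqrt_mul (sq_nonneg c)]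
  exact Real.sqrt_le_sqrt (hds.trans hsum)

theorem stmt4_general {n : ℕ} (X : Set (EuclideanSpace ℝ (Fin n)))
    (hXcv : Convex ℝ X)
    (κ : ℝ) (hκ : IsGreatest ((fun x => ‖x‖) '' X) κ) (hκpos : 0 < κ)
    (T : ℕ) (ω : ℕ → ℝ)
    (f x : ℕ → EuclideanSpace ℝ (Fin n)) (hx : ∀ t ∈ Icc 1 T, x t ∈ X)
    (L : ℝ) (hL : ∀ t ∈ Icc 1 T, ‖f t‖ ≤ L)
    (v : ℕ → EuclideanSpace ℝ (Fin (n + 1)))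
    (hv : ∀ t, v t = pr (⟪f t, x t⟫ / κ) (-(f t)))
    (u : ℕ → EuclideanSpace ℝ (Fin (n + 1)))
    (hu0 : u 0 = 0) (hu : ∀ t ∈ Icc 1 T, u t = u (t - 1) + ω t • v t)
    (hchoice : ∀ t ∈ Icc 1 T, ∃ α : ℝ, 0 ≤ α ∧
      IsProjOn (u (t - 1)) (coneLift κ X) (α • pr κ (x t))) :
    (Metric.infDist (u T) (polarCone (coneLift κ X))) ^ 2
        ≤ ∑ t ∈ Icc 1 T, ω t ^ 2 * ‖v t‖ ^ 2 ∧
      Metric.infDist (u T) (polarCone (coneLift κ X))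
        ≤ Real.sqrt 2 * L * Real.sqrt (∑ t ∈ Icc 1 T, ω t ^ 2) := by
  have hdist : Metric.infDist (u T) (polarCone (coneLift κ X)) ^ 2
      ≤ ∑ t ∈ Icc 1 T, ω t ^ 2 * ‖v t‖ ^ 2 := by
    refine le_sum_Icc_of_le_add (g := fun t => Metric.infDist (u t) _ ^ 2) ?_ fun t ht => ?_
    · simp [hu0, Metric.infDist_zero_of_mem (zero_mem_polarCone_s4 _)]
    obtain ⟨α, -, hproj⟩ := hchoice t ht
    rw [hu t ht, hv t]
    exact hproj.infDist_add_smul_cbaPayoff_sq_le hXcv hκpos.ne'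
  refine ⟨hdist, le_mul_sqrt_sum_sq Metric.infDist_nonneg hdist fun t ht => ?_⟩
  rw [hv t]
  exact (norm_cbaPayoff_le hκpos _ (hκ.2 ⟨x t, hx t ht, rfl⟩)).trans (by gcongr; exact hL t ht)

/-- distance bound for CBA: with iterates `u_t = u_{t-1} + ω_t v_t`,
`v_t = (⟨f_t, x_t⟩/κ, −f_t)`, and decisions chosen by the CBA rule
`π_C(u_{t-1}) = α_t • (κ, x_t)`, one has `d(u_T, C°)² ≤ ∑ ω_t² ‖v_t‖²`; in
particular `d(u_T, C°) ≤ √2 · L · √(∑ ω_t²)` when `‖f_t‖₂ ≤ L`. -/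
theorem stmt4 {n : ℕ} (X : Set (EuclideanSpace ℝ (Fin n)))
    (hXne : X.Nonempty) (hXcv : Convex ℝ X) (hXcp : IsCompact X)
    (κ : ℝ) (hκ : IsGreatest ((fun x => ‖x‖) '' X) κ) (hκpos : 0 < κ)
    (T : ℕ) (hT : 1 ≤ T) (ω : ℕ → ℝ) (hω : ∀ t ∈ Icc 1 T, 0 < ω t)
    (f x : ℕ → EuclideanSpace ℝ (Fin n)) (hx : ∀ t ∈ Icc 1 T, x t ∈ X)
    (L : ℝ) (hL : ∀ t ∈ Icc 1 T, ‖f t‖ ≤ L)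
    (v : ℕ → EuclideanSpace ℝ (Fin (n + 1)))
    (hv : ∀ t, v t = pr (⟪f t, x t⟫ / κ) (-(f t)))
    (u : ℕ → EuclideanSpace ℝ (Fin (n + 1)))
    (hu0 : u 0 = 0) (hu : ∀ t ∈ Icc 1 T, u t = u (t - 1) + ω t • v t)
    (hchoice : ∀ t ∈ Icc 1 T, ∃ α : ℝ, 0 ≤ α ∧
      IsProjOn (u (t - 1)) (coneLift κ X) (α • pr κ (x t))) :
    (Metric.infDist (u T) (polarCone (coneLift κ X))) ^ 2
        ≤ ∑ t ∈ Icc 1 T, ω t ^ 2 * ‖v t‖ ^ 2 ∧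
      Metric.infDist (u T) (polarCone (coneLift κ X))
        ≤ Real.sqrt 2 * L * Real.sqrt (∑ t ∈ Icc 1 T, ω t ^ 2) :=
  stmt4_general X hXcv κ hκ hκpos T ω f x hx L hL v hv u hu0 hu hchoice

end
end

section
/- Let X ⊆ ℝⁿ and Y ⊆ ℝᵐ be nonempty convex compact sets and F : X × Y → ℝ be convex in its first argument and concave in its second. Let T ≥ 1 and nonnegative weights θ_2,…,θ_{T+1} with S_T = ∑_{t=1}^T θ_{t+1} > 0. Let x_1,…,x_{T+1} ∈ X, y_1,…,y_T ∈ Y, and for each t = 1,…,T let f_t ∈ ℝⁿ be a subgradient of F(·, y_t) at x_t and g_t ∈ ℝᵐ a supergradient of F(x_{t+1}, ·) at y_t. Set x̄_T = (1/S_T)∑_{t=1}^T θ_{t+1} x_{t+1} and ȳ_T = (1/S_T)∑_{t=1}^T θ_{t+1} y_t. Then sup_{y∈Y} F(x̄_T, y) − inf_{x∈X} F(x, ȳ_T) ≤ (1/S_T)·[ (sup_{y∈Y} ∑_{t=1}^T θ_{t+1}⟨g_t, y⟩ − ∑_{t=1}^T θ_{t+1}⟨g_t, y_t⟩) + (∑_{t=1}^T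 θ_{t+1}⟨f_t, x_t⟩ − inf_{x∈X} ∑_{t=1}^T θ_{t+1}⟨f_t, x⟩) + ∑_{t=1}^T θ_{t+1}(F(x_{t+1}, y_t) − F(x_t, y_t)) ]. -/
/-!
By Jensen's inequality, `F(x̄, y)` is at most the `θ`-average of the `F(x_{t+1}, y)`, and the
supergradient inequality bounds each of these by `F(x_{t+1}, y_t) + ⟨g_t, y - y_t⟩`; taking the
supremum over `y` bounds `sup_y F(x̄, y)`. Symmetrically, concavity and the subgradient inequality
give `F(x, ȳ) ≥ avg_t (F(x_t, y_t) + ⟨f_t, x - x_t⟩)`, which bounds `inf_x F(x, ȳ)` from below.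
Because the two players' sequences are shifted, the values `F(x_{t+1}, y_t)` and `F(x_t, y_t)`
in the two bounds do not cancel; their difference is the alternation term.
-/

set_option autoImplicit false

open scoped RealInnerProductSpace
open Finset

namespace Finset

variable {ι : Type*} {s : Finset ι} {w : ι → ℝ}

theorem centerMass_le_centerMass {a b : ι → ℝ} (hw : ∀ i ∈ s, 0 ≤ w i)
    (hab : ∀ i ∈ s, a i ≤ b i) : s.centerMass w a ≤ s.centerMass w b :=
  smul_le_smul_of_nonneg_left
    (sum_le_sum fun i hi => smul_le_smul_of_nonneg_left (hab i hi) (hw i hi))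
    (inv_nonneg.2 (sum_nonneg hw))

theorem centerMass_add_inner_sub {E : Type*} [NormedAddCommGroup E] [InnerProductSpace ℝ E]
    (a : ι → ℝ) (g y : ι → E) (v : E) :
    s.centerMass w (fun i => a i + ⟪g i, v - y i⟫) =
      (∑ i ∈ s, w i)⁻¹ *
        (∑ i ∈ s, w i * a i + (∑ i ∈ s, w i * ⟪g i, v⟫ - ∑ i ∈ s, w i * ⟪g i, y i⟫)) := by
  simp only [centerMass, smul_eq_mul, inner_sub_right, mul_add, mul_sub, sum_add_distrib,
    sum_sub_distrib]

end Finset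

section

variable {E : Type*} [AddCommGroup E] [Module ℝ E] {ι : Type*} {s : Finset ι} {w : ι → ℝ}
  {X : Set E} {φ : E → ℝ} {p : ι → E} {b : ι → ℝ}

theorem ConvexOn.map_centerMass_le_of_le (hφ : ConvexOn ℝ X φ) (hw₀ : ∀ i ∈ s, 0 ≤ w i)
    (hw : 0 < ∑ i ∈ s, w i) (hp : ∀ i ∈ s, p i ∈ X) (hb : ∀ i ∈ s, φ (p i) ≤ b i) :
    φ (s.centerMass w p) ≤ s.centerMass w b :=
  (hφ.map_centerMass_le hw₀ hw hp).trans (centerMass_le_centerMass hw₀ hb)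

theorem ConcaveOn.le_map_centerMass_of_le (hφ : ConcaveOn ℝ X φ) (hw₀ : ∀ i ∈ s, 0 ≤ w i)
    (hw : 0 < ∑ i ∈ s, w i) (hp : ∀ i ∈ s, p i ∈ X) (hb : ∀ i ∈ s, b i ≤ φ (p i)) :
    s.centerMass w b ≤ φ (s.centerMass w p) :=
  (centerMass_le_centerMass hw₀ hb).trans (hφ.le_map_centerMass hw₀ hw hp)

end

section

variable {E E' ι : Type*} [NormedAddCommGroup E] [InnerProductSpace ℝ E]
  [NormedAddCommGroup E'] [InnerProductSpace ℝ E'] {X : Set E} {Y : Set E'} {F : E → E' → ℝ}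
  {s : Finset ι} {w : ι → ℝ} {x : ι → E} {y : ι → E'}

theorem IsCompact.bddAbove_range_sum_inner (hY : IsCompact Y) (w : ι → ℝ) (g : ι → E') :
    BddAbove (Set.range fun v : Y => ∑ i ∈ s, w i * ⟪g i, (v : E')⟫) := by
  have := hY.bddAbove_image (f := fun v : E' => ∑ i ∈ s, w i * ⟪g i, v⟫) (by fun_prop)
  rwa [Set.image_eq_range] at this

theorem IsCompact.bddBelow_range_sum_inner (hX : IsCompact X) (w : ι → ℝ) (f : ι → E) :
    BddBelow (Set.range fun v : X => ∑ i ∈ s, w i * ⟪f i, (v : E)⟫) := by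
  have := hX.bddBelow_image (f := fun u : E => ∑ i ∈ s, w i * ⟪f i, u⟫) (by fun_prop)
  rwa [Set.image_eq_range] at this

theorem iSup_map_centerMass_le {g : ι → E'} (hY : Y.Nonempty)
    (hYb : BddAbove (Set.range fun v : Y => ∑ i ∈ s, w i * ⟪g i, (v : E')⟫))
    (hF : ∀ v ∈ Y, ConvexOn ℝ X fun u => F u v) (hw₀ : ∀ i ∈ s, 0 ≤ w i)
    (hw : 0 < ∑ i ∈ s, w i) (hx : ∀ i ∈ s, x i ∈ X)
    (hg : ∀ i ∈ s, ∀ v ∈ Y, F (x i) v ≤ F (x i) (y i) + ⟪g i, v - y i⟫) :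
    ⨆ v : Y, F (s.centerMass w x) v ≤
      (∑ i ∈ s, w i)⁻¹ * (∑ i ∈ s, w i * F (x i) (y i) +
        ((⨆ v : Y, ∑ i ∈ s, w i * ⟪g i, (v : E')⟫) - ∑ i ∈ s, w i * ⟪g i, y i⟫)) := by
  have := hY.to_subtype
  refine ciSup_le fun v => ?_
  calc F (s.centerMass w x) v
      ≤ s.centerMass w (fun i => F (x i) (y i) + ⟪g i, v - y i⟫) :=
        (hF v v.2).map_centerMass_le_of_le hw₀ hw hx fun i hi => hg i hi v v.2
    _ = _ := centerMass_add_inner_sub _ _ _ _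
    _ ≤ _ := by
        gcongr
        exact le_ciSup hYb v

theorem le_iInf_map_centerMass {f : ι → E} (hX : X.Nonempty)
    (hXb : BddBelow (Set.range fun u : X => ∑ i ∈ s, w i * ⟪f i, (u : E)⟫))
    (hF : ∀ u ∈ X, ConcaveOn ℝ Y fun v => F u v) (hw₀ : ∀ i ∈ s, 0 ≤ w i)
    (hw : 0 < ∑ i ∈ s, w i) (hy : ∀ i ∈ s, y i ∈ Y)
    (hf : ∀ i ∈ s, ∀ u ∈ X, F (x i) (y i) + ⟪f i, u - x i⟫ ≤ F u (y i)) :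
    (∑ i ∈ s, w i)⁻¹ * (∑ i ∈ s, w i * F (x i) (y i) +
        ((⨅ u : X, ∑ i ∈ s, w i * ⟪f i, (u : E)⟫) - ∑ i ∈ s, w i * ⟪f i, x i⟫)) ≤
      ⨅ u : X, F u (s.centerMass w y) := by
  have := hX.to_subtype
  refine le_ciInf fun u => ?_
  calc _ ≤ (∑ i ∈ s, w i)⁻¹ * (∑ i ∈ s, w i * F (x i) (y i) +
          (∑ i ∈ s, w i * ⟪f i, (u : E)⟫ - ∑ i ∈ s, w i * ⟪f i, x i⟫)) := by
        gcongr
        exact ciInf_le hXb u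
    _ = s.centerMass w (fun i => F (x i) (y i) + ⟪f i, u - x i⟫) :=
        (centerMass_add_inner_sub _ _ _ _).symm
    _ ≤ F u (s.centerMass w y) :=
        (hF u u.2).le_map_centerMass_of_le hw₀ hw hy fun i hi => hf i hi u u.2

end

theorem stmt11_general {n m : ℕ}
    (X : Set (EuclideanSpace ℝ (Fin n))) (Y : Set (EuclideanSpace ℝ (Fin m)))
    (hXne : X.Nonempty) (hXcp : IsCompact X)
    (hYne : Y.Nonempty) (hYcp : IsCompact Y)
    (F : EuclideanSpace ℝ (Fin n) → EuclideanSpace ℝ (Fin m) → ℝ)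
    (hFcv : ∀ y ∈ Y, ConvexOn ℝ X (fun x => F x y))
    (hFcc : ∀ x ∈ X, ConcaveOn ℝ Y (fun y => F x y))
    (T : ℕ)
    (θ : ℕ → ℝ) (hθ : ∀ t ∈ Icc 1 T, 0 ≤ θ (t + 1))
    (hS : 0 < ∑ t ∈ Icc 1 T, θ (t + 1))
    (x : ℕ → EuclideanSpace ℝ (Fin n)) (y : ℕ → EuclideanSpace ℝ (Fin m))
    (f : ℕ → EuclideanSpace ℝ (Fin n)) (g : ℕ → EuclideanSpace ℝ (Fin m))
    (hx : ∀ t ∈ Icc 1 (T + 1), x t ∈ X) (hy : ∀ t ∈ Icc 1 T, y t ∈ Y)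
    -- `f t` is a subgradient of `F(·, y t)` at `x t`
    (hf : ∀ t ∈ Icc 1 T, ∀ x' ∈ X, F (x t) (y t) + ⟪f t, x' - x t⟫ ≤ F x' (y t))
    -- `g t` is a supergradient of `F(x (t+1), ·)` at `y t`
    (hg : ∀ t ∈ Icc 1 T, ∀ y' ∈ Y,
      F (x (t + 1)) y' ≤ F (x (t + 1)) (y t) + ⟪g t, y' - y t⟫) :
    (⨆ yy : Y,
        F ((∑ t ∈ Icc 1 T, θ (t + 1))⁻¹ • ∑ t ∈ Icc 1 T, θ (t + 1) • x (t + 1)) yy)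
      - (⨅ xx : X,
          F xx ((∑ t ∈ Icc 1 T, θ (t + 1))⁻¹ • ∑ t ∈ Icc 1 T, θ (t + 1) • y t))
    ≤ (∑ t ∈ Icc 1 T, θ (t + 1))⁻¹ *
        (((⨆ yy : Y, ∑ t ∈ Icc 1 T, θ (t + 1) * ⟪g t, (yy : EuclideanSpace ℝ (Fin m))⟫)
            - ∑ t ∈ Icc 1 T, θ (t + 1) * ⟪g t, y t⟫)
          + ((∑ t ∈ Icc 1 T, θ (t + 1) * ⟪f t, x t⟫)
            - ⨅ xx : X, ∑ t ∈ Icc 1 T, θ (t + 1) * ⟪f t, (xx : EuclideanSpace ℝ (Fin n))⟫)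
          + ∑ t ∈ Icc 1 T, θ (t + 1) * (F (x (t + 1)) (y t) - F (x t) (y t))) := by
  have hx_succ : ∀ t ∈ Icc 1 T, x (t + 1) ∈ X := fun t ht =>
    hx (t + 1) (by simp only [mem_Icc] at ht ⊢; omega)
  have hsup := iSup_map_centerMass_le hYne (hYcp.bddAbove_range_sum_inner _ g) hFcv hθ hS
    hx_succ hg
  have hinf := le_iInf_map_centerMass hXne (hXcp.bddBelow_range_sum_inner _ f) hFcc hθ hS hy hf
  refine (sub_le_sub hsup hinf).trans_eq ?_
  simp only [mul_sub, sum_sub_distrib]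
  ring

/-- Theorem 5: duality-gap bound for the repeated game framework
with alternation. Here `x̄_T = (1/S_T) ∑ θ_{t+1} x_{t+1}`,
`ȳ_T = (1/S_T) ∑ θ_{t+1} y_t`, and the extra term
`∑ θ_{t+1} (F(x_{t+1}, y_t) − F(x_t, y_t))` accounts for the alternation. -/
theorem stmt11 {n m : ℕ}
    (X : Set (EuclideanSpace ℝ (Fin n))) (Y : Set (EuclideanSpace ℝ (Fin m)))
    (hXne : X.Nonempty) (hXcv : Convex ℝ X) (hXcp : IsCompact X)
    (hYne : Y.Nonempty) (hYcv : Convex ℝ Y) (hYcp : IsCompact Y)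
    (F : EuclideanSpace ℝ (Fin n) → EuclideanSpace ℝ (Fin m) → ℝ)
    (hFcv : ∀ y ∈ Y, ConvexOn ℝ X (fun x => F x y))
    (hFcc : ∀ x ∈ X, ConcaveOn ℝ Y (fun y => F x y))
    (T : ℕ) (hT : 1 ≤ T)
    (θ : ℕ → ℝ) (hθ : ∀ t ∈ Icc 1 T, 0 ≤ θ (t + 1))
    (hS : 0 < ∑ t ∈ Icc 1 T, θ (t + 1))
    (x : ℕ → EuclideanSpace ℝ (Fin n)) (y : ℕ → EuclideanSpace ℝ (Fin m))
    (f : ℕ → EuclideanSpace ℝ (Fin n)) (g : ℕ → EuclideanSpace ℝ (Fin m))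
    (hx : ∀ t ∈ Icc 1 (T + 1), x t ∈ X) (hy : ∀ t ∈ Icc 1 T, y t ∈ Y)
    -- `f t` is a subgradient of `F(·, y t)` at `x t`
    (hf : ∀ t ∈ Icc 1 T, ∀ x' ∈ X, F (x t) (y t) + ⟪f t, x' - x t⟫ ≤ F x' (y t))
    -- `g t` is a supergradient of `F(x (t+1), ·)` at `y t`
    (hg : ∀ t ∈ Icc 1 T, ∀ y' ∈ Y,
      F (x (t + 1)) y' ≤ F (x (t + 1)) (y t) + ⟪g t, y' - y t⟫) :
    (⨆ yy : Y,
        F ((∑ t ∈ Icc 1 T, θ (t + 1))⁻¹ • ∑ t ∈ Icc 1 T, θ (t + 1) • x (t + 1)) yy)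
      - (⨅ xx : X,
          F xx ((∑ t ∈ Icc 1 T, θ (t + 1))⁻¹ • ∑ t ∈ Icc 1 T, θ (t + 1) • y t))
    ≤ (∑ t ∈ Icc 1 T, θ (t + 1))⁻¹ *
        (((⨆ yy : Y, ∑ t ∈ Icc 1 T, θ (t + 1) * ⟪g t, (yy : EuclideanSpace ℝ (Fin m))⟫)
            - ∑ t ∈ Icc 1 T, θ (t + 1) * ⟪g t, y t⟫)
          + ((∑ t ∈ Icc 1 T, θ (t + 1) * ⟪f t, x t⟫)
            - ⨅ xx : X, ∑ t ∈ Icc 1 T, θ (t + 1) * ⟪f t, (xx : EuclideanSpace ℝ (Fin n))⟫)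
          + ∑ t ∈ Icc 1 T, θ (t + 1) * (F (x (t + 1)) (y t) - F (x t) (y t))) :=
  stmt11_general X Y hXne hXcp hYne hYcp F hFcv hFcc T θ hθ hS x y f g hx hy hf hg
end
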